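/- For every g > 1 there exists ρ > 0 such that: (i) the open set {(a,b) ∈ ℝ² : P(a,b) < ρ} is the union of four open sets with pairwise disjoint closures, containing the points (0,1), (0,−1), (1,0), (−1,0) respectively; and (ii) the set {(a,b) ∈ ℝ² : P(a,b) ≤ ρ} contains no point with b = 1/2. -/
import Mathlib


/-- `P(a,b) = (1/4)(a²+b²−1)² + (1/2)(g−1)a²b²`. -/
noncomputable def Pfun (g a b : ℝ) : ℝ :=
  (1/4) * (a ^ 2 + b ^ 2 - 1) ^ 2 + (1/2) * (g - 1) * a ^ 2 * b ^ 2

/-- For every `g > 1` there is `ρ > 0` such that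
`{P < ρ}` is the union of four open sets with pairwise disjoint closures,
containing `(0,1)`, `(0,−1)`, `(1,0)`, `(−1,0)` respectively, and moreover
`{P ≤ ρ}` contains no point with `b = 1/2`. -/
theorem sublevel_set_structure (g : ℝ) (hg : 1 < g) :
    ∃ ρ > (0 : ℝ), ∃ U₁ U₂ U₃ U₄ : Set (ℝ × ℝ),
      IsOpen U₁ ∧ IsOpen U₂ ∧ IsOpen U₃ ∧ IsOpen U₄ ∧
      {p : ℝ × ℝ | Pfun g p.1 p.2 < ρ} = U₁ ∪ U₂ ∪ U₃ ∪ U₄ ∧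
      ((0 : ℝ), (1 : ℝ)) ∈ U₁ ∧ ((0 : ℝ), (-1 : ℝ)) ∈ U₂ ∧
      ((1 : ℝ), (0 : ℝ)) ∈ U₃ ∧ ((-1 : ℝ), (0 : ℝ)) ∈ U₄ ∧
      closure U₁ ∩ closure U₂ = ∅ ∧ closure U₁ ∩ closure U₃ = ∅ ∧
      closure U₁ ∩ closure U₄ = ∅ ∧ closure U₂ ∩ closure U₃ = ∅ ∧
      closure U₂ ∩ closure U₄ = ∅ ∧ closure U₃ ∩ closure U₄ = ∅ ∧
      (∀ a b : ℝ, Pfun g a b ≤ ρ → b ≠ 1/2) := by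
  set ρ : ℝ := min (1/32) ((g-1)/64) with hρdef
  have hρpos : 0 < ρ := lt_min (by norm_num) (by linarith)
  have hρ1 : ρ ≤ 1/32 := min_le_left _ _
  have hρ2 : ρ ≤ (g-1)/64 := min_le_right _ _
  have hPcont : Continuous (fun p : ℝ × ℝ => Pfun g p.1 p.2) := by
    unfold Pfun; fun_prop
  -- key estimates
  have keyA : ∀ a b : ℝ, Pfun g a b ≤ ρ → ¬(a^2 ≤ 1/4 ∧ b^2 ≤ 1/4) := by
    rintro a b hP ⟨ha, hb⟩
    have h0 : (0:ℝ) ≤ (g-1)*a^2*b^2 :=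
      mul_nonneg (mul_nonneg (by linarith : (0:ℝ) ≤ g-1) (sq_nonneg a)) (sq_nonneg b)
    unfold Pfun at hP
    nlinarith [sq_nonneg (a^2+b^2), mul_nonneg (sub_nonneg.2 ha) (sub_nonneg.2 hb)]
  have keyB : ∀ a b : ℝ, Pfun g a b ≤ ρ → ¬(1/4 ≤ a^2 ∧ 1/4 ≤ b^2) := by
    rintro a b hP ⟨ha, hb⟩
    unfold Pfun at hP
    nlinarith [sq_nonneg (a^2+b^2-1),
      mul_nonneg (mul_nonneg (le_of_lt (by linarith : (0:ℝ) < g - 1))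
        (sub_nonneg.2 ha)) (sub_nonneg.2 hb),
      mul_nonneg (sub_nonneg.2 ha) (sub_nonneg.2 hb)]
  set S : Set (ℝ × ℝ) := {p | Pfun g p.1 p.2 < ρ} with hS
  have hSopen : IsOpen S := isOpen_lt hPcont continuous_const
  have hSclos : closure S ⊆ {p : ℝ × ℝ | Pfun g p.1 p.2 ≤ ρ} :=
    closure_minimal (fun p (hp : Pfun g p.1 p.2 < ρ) => le_of_lt hp) (isClosed_le hPcont continuous_const)
  have hclP : ∀ (T : Set (ℝ × ℝ)) (p : ℝ × ℝ), p ∈ closure (S ∩ T) →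
      Pfun g p.1 p.2 ≤ ρ := fun T p hp =>
    hSclos (closure_mono Set.inter_subset_left hp)
  have hcl1 : ∀ p ∈ closure (S ∩ {p : ℝ × ℝ | 1/2 < p.2}), 1/2 ≤ p.2 := fun p hp =>
    closure_minimal (fun q hq => le_of_lt hq.2)
      (isClosed_le continuous_const continuous_snd) hp
  have hcl2 : ∀ p ∈ closure (S ∩ {p : ℝ × ℝ | p.2 < -(1/2)}), p.2 ≤ -(1/2) := fun p hp =>
    closure_minimal (fun q hq => le_of_lt hq.2)
      (isClosed_le continuous_snd continuous_const) hp
  have hcl3 : ∀ p ∈ closure (S ∩ {p : ℝ × ℝ | 1/2 < p.1}), 1/2 ≤ p.1 := fun p hp =>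
    closure_minimal (fun q hq => le_of_lt hq.2)
      (isClosed_le continuous_const continuous_fst) hp
  have hcl4 : ∀ p ∈ closure (S ∩ {p : ℝ × ℝ | p.1 < -(1/2)}), p.1 ≤ -(1/2) := fun p hp =>
    closure_minimal (fun q hq => le_of_lt hq.2)
      (isClosed_le continuous_fst continuous_const) hp
  refine ⟨ρ, hρpos, S ∩ {p | 1/2 < p.2}, S ∩ {p | p.2 < -(1/2)},
    S ∩ {p | 1/2 < p.1}, S ∩ {p | p.1 < -(1/2)},
    hSopen.inter (isOpen_lt continuous_const continuous_snd),
    hSopen.inter (isOpen_lt continuous_snd continuous_const),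
    hSopen.inter (isOpen_lt continuous_const continuous_fst),
    hSopen.inter (isOpen_lt continuous_fst continuous_const), ?_, ?_, ?_, ?_, ?_,
    ?_, ?_, ?_, ?_, ?_, ?_, ?_⟩
  · -- union
    apply Set.Subset.antisymm
    · intro p hp
      have hP : Pfun g p.1 p.2 ≤ ρ := le_of_lt hp
      by_cases h1 : 1/2 < p.2
      · exact Or.inl (Or.inl (Or.inl ⟨hp, h1⟩))
      by_cases h2 : p.2 < -(1/2)
      · exact Or.inl (Or.inl (Or.inr ⟨hp, h2⟩))
      by_cases h3 : 1/2 < p.1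
      · exact Or.inl (Or.inr ⟨hp, h3⟩)
      by_cases h4 : p.1 < -(1/2)
      · exact Or.inr ⟨hp, h4⟩
      · push_neg at h1 h2 h3 h4
        exact absurd ⟨by nlinarith, by nlinarith⟩ (keyA p.1 p.2 hP)
    · rintro p (((⟨h,_⟩|⟨h,_⟩)|⟨h,_⟩)|⟨h,_⟩) <;> exact h
  · constructor
    · show Pfun g 0 1 < ρ
      unfold Pfun; norm_num; exact hρpos
    · norm_num
  · constructor
    · show Pfun g 0 (-1) < ρ
      unfold Pfun; norm_num; exact hρpos
    · norm_num
  · constructor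
    · show Pfun g 1 0 < ρ
      unfold Pfun; norm_num; exact hρpos
    · norm_num
  · constructor
    · show Pfun g (-1) 0 < ρ
      unfold Pfun; norm_num; exact hρpos
    · norm_num
  all_goals try (
    apply Set.eq_empty_iff_forall_notMem.2;
    rintro p ⟨hp1, hp2⟩)
  case _ => linarith [hcl1 p hp1, hcl2 p hp2]
  case _ =>
    exact keyB p.1 p.2 (hclP _ p hp1)
      ⟨by nlinarith [hcl3 p hp2], by nlinarith [hcl1 p hp1]⟩
  case _ =>
    exact keyB p.1 p.2 (hclP _ p hp1)
      ⟨by nlinarith [hcl4 p hp2], by nlinarith [hcl1 p hp1]⟩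
  case _ =>
    exact keyB p.1 p.2 (hclP _ p hp1)
      ⟨by nlinarith [hcl3 p hp2], by nlinarith [hcl2 p hp1]⟩
  case _ =>
    exact keyB p.1 p.2 (hclP _ p hp1)
      ⟨by nlinarith [hcl4 p hp2], by nlinarith [hcl2 p hp1]⟩
  case _ => linarith [hcl3 p hp1, hcl4 p hp2]
  case _ =>
    intro a b hP hb
    rcases le_total (a^2) (1/4) with ha | ha
    · exact keyA a b hP ⟨ha, by rw [hb]; norm_num⟩
    · exact keyB a b hP ⟨ha, by rw [hb]; norm_num⟩
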